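/- Let A ∈ ℝ^{M×N} be a real matrix and η ≠ 0, λ ∈ ℝ. Consider the (N+M)×(N+M) block matrix B := [[I_N, −(1/η)Aᵀ], [2λA, I_M − (2λ/η)AAᵀ]], so that the alternating gradient descent–ascent iteration x^r = x^{r−1} − (1/η)Aᵀy^{r−1}, y^r = y^{r−1} + 2λAx^r on the bilinear problem min_x max_y yᵀAx satisfies (x^r; y^r) = B (x^{r−1}; y^{r−1}). Then det B = 1; consequently B has a complex eigenvalue of modulus at least 1, so the linear system describing the dynamics of (x^r, y^r) is never a contraction, regardless of the choices of η and λ. -/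

import Mathlib

/-!
One step of alternating GDA is the composition of two block shears: the `x`-update
`fromBlocks 1 (-(1/η) • Aᵀ) 0 1` followed by the `y`-update `fromBlocks 1 0 (2λ • A) 1`.
Shears have determinant `1`, so `det B = 1`. Over `ℂ` the determinant is the product of the
roots of the characteristic polynomial, and a nonempty product of numbers of modulus `< 1`
has modulus `< 1`; hence some eigenvalue has modulus at least `1`.
-/

/-- The iteration matrix of the alternating gradient descent–ascent scheme
`x⁺ = x − (1/η)Aᵀy`, `y⁺ = y + 2λAx⁺` for the bilinear problem `min_x max_y yᵀAx`. -/
noncomputable def gdaMatrix {N M : ℕ} (A : Matrix (Fin M) (Fin N) ℝ) (η lam : ℝ) :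
    Matrix (Fin N ⊕ Fin M) (Fin N ⊕ Fin M) ℝ :=
  Matrix.fromBlocks (1 : Matrix (Fin N) (Fin N) ℝ) ((-(1 / η)) • A.transpose)
    ((2 * lam) • A) ((1 : Matrix (Fin M) (Fin M) ℝ) - (2 * lam / η) • (A * A.transpose))

theorem Multiset.exists_one_le_norm_of_one_le_norm_prod {α : Type*} [SeminormedCommRing α]
    [NormMulClass α] [NormOneClass α] {s : Multiset α} (hs : s ≠ 0) (h : 1 ≤ ‖s.prod‖) :
    ∃ a ∈ s, 1 ≤ ‖a‖ := by
  obtain ⟨a, ha, hmax⟩ := s.exists_max_image (‖·‖₊) hs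
  have hprod : ‖s.prod‖₊ ≤ ‖a‖₊ ^ card s := by
    change nnnormHom s.prod ≤ _
    rw [map_multiset_prod, ← card_map nnnormHom]
    exact prod_le_pow_card _ _ (by simpa using hmax)
  have hpow : 1 ≤ ‖a‖₊ ^ card s := le_trans (by exact_mod_cast h) hprod
  exact ⟨a, ha, by exact_mod_cast (one_le_pow_iff (card_pos.2 hs).ne').1 hpow⟩

namespace Matrix

variable {m n R : Type*} [Fintype m] [Fintype n] [DecidableEq m] [DecidableEq n]

theorem exists_isRoot_charpoly_one_le_norm {K : Type*} [NormedField K] [IsAlgClosed K]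
    [Nonempty n] (B : Matrix n n K) (h : 1 ≤ ‖B.det‖) :
    ∃ μ : K, B.charpoly.IsRoot μ ∧ 1 ≤ ‖μ‖ := by
  have hroots : B.charpoly.roots ≠ 0 := by
    rw [← Multiset.card_pos, IsAlgClosed.card_roots_eq_natDegree, charpoly_natDegree_eq_dim]
    exact Fintype.card_pos
  rw [det_eq_prod_roots_charpoly] at h
  obtain ⟨μ, hμ, hle⟩ := Multiset.exists_one_le_norm_of_one_le_norm_prod hroots h
  exact ⟨μ, Polynomial.isRoot_of_mem_roots hμ, hle⟩

theorem fromBlocks_one_zero₁₂_one_mulVec_sumElim [CommRing R] (C : Matrix n m R) (x : m → R)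
    (y : n → R) : fromBlocks 1 0 C 1 *ᵥ Sum.elim x y = Sum.elim x (y + C *ᵥ x) := by
  simp [fromBlocks_mulVec, add_comm]

theorem fromBlocks_one_zero₂₁_one_mulVec_sumElim [CommRing R] (B : Matrix m n R) (x : m → R)
    (y : n → R) : fromBlocks 1 B 0 1 *ᵥ Sum.elim x y = Sum.elim (x + B *ᵥ y) y := by
  simp [fromBlocks_mulVec]

end Matrix

theorem gdaMatrix_eq_mul {N M : ℕ} (A : Matrix (Fin M) (Fin N) ℝ) (η lam : ℝ) :
    gdaMatrix A η lam =
      Matrix.fromBlocks 1 0 ((2 * lam) • A) 1 *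
        Matrix.fromBlocks 1 ((-(1 / η)) • A.transpose) 0 1 := by
  rw [gdaMatrix, Matrix.fromBlocks_multiply]
  congr 1 <;> simp [smul_smul, sub_eq_neg_add, div_eq_mul_inv, mul_comm]

theorem gdaMatrix_det {N M : ℕ} (A : Matrix (Fin M) (Fin N) ℝ) (η lam : ℝ) :
    (gdaMatrix A η lam).det = 1 := by
  rw [gdaMatrix_eq_mul, Matrix.det_mul, Matrix.det_fromBlocks_zero₁₂, Matrix.det_fromBlocks_zero₂₁]
  simp

theorem gda_bilinear_unstable_general {N M : ℕ} (hN : 0 < N)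
    (A : Matrix (Fin M) (Fin N) ℝ) (η lam : ℝ) :
    (∀ (x : Fin N → ℝ) (y : Fin M → ℝ),
        (gdaMatrix A η lam).mulVec (Sum.elim x y) =
          Sum.elim (x - (1 / η) • A.transpose.mulVec y)
            (y + (2 * lam) • A.mulVec (x - (1 / η) • A.transpose.mulVec y)))
    ∧ (gdaMatrix A η lam).det = 1
    ∧ (∃ μ : ℂ, ((gdaMatrix A η lam).map (algebraMap ℝ ℂ)).charpoly.IsRoot μ
        ∧ 1 ≤ ‖μ‖) := by
  refine ⟨fun x y => ?_, gdaMatrix_det A η lam, ?_⟩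
  · rw [gdaMatrix_eq_mul, ← Matrix.mulVec_mulVec,
      Matrix.fromBlocks_one_zero₂₁_one_mulVec_sumElim,
      Matrix.fromBlocks_one_zero₁₂_one_mulVec_sumElim, neg_smul, Matrix.neg_mulVec,
      ← sub_eq_add_neg, Matrix.smul_mulVec, Matrix.smul_mulVec]
  · have : Nonempty (Fin N) := Fin.pos_iff_nonempty.mp hN
    refine Matrix.exists_isRoot_charpoly_one_le_norm _ ?_
    rw [← RingHom.mapMatrix_apply, ← RingHom.map_det, gdaMatrix_det, map_one, norm_one]

/-- **Example 1** (instability of plain alternating gradient descent–ascent on bilinear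
problems): the GDA iteration is the linear map given by `gdaMatrix A η lam`, whose
determinant equals `1`; consequently it has a complex eigenvalue (a root of its
characteristic polynomial) of modulus at least `1`, so the linear dynamics of
`(x^r, y^r)` is never a contraction, regardless of `η ≠ 0` and `λ`. -/
theorem gda_bilinear_unstable {N M : ℕ} (hN : 0 < N) (hM : 0 < M)
    (A : Matrix (Fin M) (Fin N) ℝ) (η lam : ℝ) (hη : η ≠ 0) :
    (∀ (x : Fin N → ℝ) (y : Fin M → ℝ),
        (gdaMatrix A η lam).mulVec (Sum.elim x y) =
          Sum.elim (x - (1 / η) • A.transpose.mulVec y)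
            (y + (2 * lam) • A.mulVec (x - (1 / η) • A.transpose.mulVec y)))
    ∧ (gdaMatrix A η lam).det = 1
    ∧ (∃ μ : ℂ, ((gdaMatrix A η lam).map (algebraMap ℝ ℂ)).charpoly.IsRoot μ
        ∧ 1 ≤ ‖μ‖) :=
  gda_bilinear_unstable_general hN A η lam
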